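/- Let $R$ be a commutative Noetherian ring and $N$ an $R$-module whose support is contained in a finite set of maximal ideals $\{\mathfrak{m}_1, \dots, \mathfrak{m}_t\}$. If the localization $N_{\mathfrak{m}_c}$ is a finitely generated $R_{\mathfrak{m}_c}$-module for each $1 \le c \le t$, then $N$ is a finitely generated $R$-module. -/

import Mathlib

/-!
Finite generation can be tested after localizing at every maximal ideal `P`. Lifting finitely
many generators of each `N_{m_c}` to `N` gives one finite set that generates `N_{m_c}` for every
`c`, while at a maximal ideal outside the support the localization is zero.
-/

open Submodule

theorem IsLocalizedModule.exists_finset_span_image_eq_top {R : Type*} [CommSemiring R]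
    (S : Submonoid R) (Rₛ : Type*) [CommSemiring Rₛ] [Algebra R Rₛ] [IsLocalization S Rₛ]
    {M Mₛ : Type*} [AddCommMonoid M] [Module R M] [AddCommMonoid Mₛ] [Module R Mₛ]
    [Module Rₛ Mₛ] [IsScalarTower R Rₛ Mₛ] (f : M →ₗ[R] Mₛ) [IsLocalizedModule S f]
    [Module.Finite Rₛ Mₛ] :
    ∃ T : Finset M, span Rₛ (f '' T) = ⊤ := by
  classical
  obtain ⟨s, hs⟩ := Module.Finite.fg_top (R := Rₛ) (M := Mₛ)
  choose frac hfrac using IsLocalizedModule.surj S f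
  refine ⟨s.image (frac · |>.1), eq_top_iff.mpr ?_⟩
  rw [← hs, span_le]
  intro x hx
  -- `(frac x).2 • x = f (frac x).1` and `(frac x).2` acts invertibly on `Mₛ`.
  rw [SetLike.mem_coe, ← IsLocalization.smul_mem_iff (s := (frac x).2), hfrac]
  exact subset_span ⟨_, by simpa using ⟨x, hx, rfl⟩, rfl⟩

theorem Module.Finite.of_localized_of_support_subset {R M : Type*} [CommRing R]
    [AddCommGroup M] [Module R M] {ι : Type*} [Finite ι] (p : ι → Ideal R)
    [∀ i, (p i).IsPrime] (hsupp : Module.support R M ⊆ {q | ∃ i, q.asIdeal = p i})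
    (H : ∀ i, Module.Finite (Localization.AtPrime (p i)) (LocalizedModule (p i).primeCompl M)) :
    Module.Finite R M := by
  classical
  have := Fintype.ofFinite ι
  choose T hT using fun i ↦ IsLocalizedModule.exists_finset_span_image_eq_top (p i).primeCompl
    (Localization.AtPrime (p i)) (LocalizedModule.mkLinearMap (p i).primeCompl M)
  refine ⟨Finset.univ.biUnion T, eq_top_of_localization_maximal
    (fun P _ ↦ Localization.AtPrime P) (fun P _ ↦ LocalizedModule P.primeCompl M)
    (fun P _ ↦ LocalizedModule.mkLinearMap P.primeCompl M) _ fun P hP ↦ ?_⟩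
  rw [localized'_span]
  by_cases hPM : ⟨P, hP.isPrime⟩ ∈ Module.support R M
  · obtain ⟨i, rfl : P = p i⟩ := hsupp hPM
    rw [eq_top_iff, ← hT i]
    exact span_mono <| Set.image_mono <| by
      exact_mod_cast Finset.subset_biUnion_of_mem T (Finset.mem_univ i)
  · have := Module.notMem_support_iff.mp hPM
    exact Subsingleton.elim _ _

theorem stmt_6_general (R : Type) [CommRing R]
    (t : ℕ) (m : Fin t → Ideal R) (hm : ∀ c, (m c).IsMaximal)
    (N : Type) [AddCommGroup N] [Module R N]
    (hsupp : Module.support R N ⊆ {p : PrimeSpectrum R | ∃ c, p.asIdeal = m c})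
    (hfg : ∀ c, Module.Finite (Localization.AtPrime (m c))
      (LocalizedModule (m c).primeCompl N)) :
    Module.Finite R N :=
  .of_localized_of_support_subset m hsupp hfg

theorem stmt_6 (R : Type) [CommRing R] [IsNoetherianRing R]
    (t : ℕ) (m : Fin t → Ideal R) (hm : ∀ c, (m c).IsMaximal)
    (N : Type) [AddCommGroup N] [Module R N]
    (hsupp : Module.support R N ⊆ {p : PrimeSpectrum R | ∃ c, p.asIdeal = m c})
    (hfg : ∀ c, Module.Finite (Localization.AtPrime (m c))
      (LocalizedModule (m c).primeCompl N)) :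
    Module.Finite R N :=
  stmt_6_general R t m hm N hsupp hfg
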